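/- arXiv:math/0603514 — 4 statements merged into one kernel-verified Lean document; each statement's English description precedes it below -/
import Mathlib

section
/- Let A : E → F be a closed, densely defined unbounded operator between Hilbert spaces. Then B = (A* ∘ A + Id)⁻¹ is an everywhere-defined bounded linear map from E to E with operator norm at most 1, C = A ∘ (A* ∘ A + Id)⁻¹ is an everywhere-defined bounded linear map from E to F with operator norm at most 1, and B is self-adjoint and positive. -/
/-!
Inside the Hilbert sum `E ⊕₂ F` the graph `G` of `A` is a closed subspace; let `P` be the
orthogonal projection onto it. Writing `P (x, 0) = (B x, C x)`, membership in `G` gives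
`B x ∈ dom A` and `C x = A (B x)`, while `(x, 0) - P (x, 0) = (x - B x, -C x) ⊥ G` says exactly
`⟪x - B x, u⟫ = ⟪C x, A u⟫` for `u ∈ dom A`, i.e. `C x ∈ dom A†` and `A† (C x) = x - B x`.
So `B = (A†A + 1)⁻¹` and `C = A B`. Since `(x, ·) ↦ x` is the adjoint of `x ↦ (x, 0)`, `B` is
the compression of the positive contraction `P`, hence a positive contraction, and `C` is a
contraction because `P` is.
-/

section

open ContinuousLinearMap WithLp

variable {𝕜 E F : Type*} [RCLike 𝕜]
  [NormedAddCommGroup E] [InnerProductSpace 𝕜 E] [NormedAddCommGroup F] [InnerProductSpace 𝕜 F]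

namespace WithLp

variable (𝕜 E F) in
noncomputable def inlL : E →L[𝕜] WithLp 2 (E × F) :=
  (prodContinuousLinearEquiv 2 𝕜 E F).symm.toContinuousLinearMap ∘L
    ContinuousLinearMap.inl 𝕜 E F

@[simp]
theorem inlL_apply (x : E) : inlL 𝕜 E F x = toLp 2 (x, 0) := rfl

theorem norm_inlL_le : ‖inlL 𝕜 E F‖ ≤ 1 :=
  opNorm_le_bound _ zero_le_one fun x => by simp

theorem norm_fstL_le : ‖fstL 2 𝕜 E F‖ ≤ 1 :=
  opNorm_le_bound _ zero_le_one fun x => by simpa using norm_fst_le E x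

theorem norm_sndL_le : ‖sndL 2 𝕜 E F‖ ≤ 1 :=
  opNorm_le_bound _ zero_le_one fun x => by simpa using norm_snd_le E x

theorem adjoint_inlL [CompleteSpace E] [CompleteSpace F] :
    ContinuousLinearMap.adjoint (inlL 𝕜 E F) = fstL 2 𝕜 E F := by
  refine ((eq_adjoint_iff _ _).mpr fun v x => ?_).symm
  simp [prod_inner_apply]

end WithLp

namespace LinearPMap

def graphL2 (T : E →ₗ.[𝕜] F) : Submodule 𝕜 (WithLp 2 (E × F)) :=
  T.graph.comap (WithLp.linearEquiv 2 𝕜 (E × F)).toLinearMap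

variable {T : E →ₗ.[𝕜] F}

theorem mem_graphL2_iff {v : WithLp 2 (E × F)} :
    v ∈ T.graphL2 ↔ ∃ h : v.fst ∈ T.domain, T ⟨v.fst, h⟩ = v.snd :=
  ⟨fun hv => ⟨mem_domain_of_mem_graph hv, ((image_iff _).mpr hv).symm⟩,
    fun ⟨h, hTv⟩ => (image_iff h).mp hTv.symm⟩

theorem IsClosed.isClosed_graphL2 (hT : T.IsClosed) :
    _root_.IsClosed (T.graphL2 : Set (WithLp 2 (E × F))) :=
  hT.preimage (prodContinuousLinearEquiv 2 𝕜 E F).continuous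

theorem exists_adjoint_apply_of_mem_orthogonal_graphL2 [CompleteSpace E]
    (hT : Dense (T.domain : Set E)) {a : E} {b : F} (hab : toLp 2 (a, -b) ∈ T.graphL2ᗮ) :
    ∃ h : b ∈ T†.domain, T† ⟨b, h⟩ = a := by
  have hperp (u : T.domain) : inner 𝕜 a (u : E) = inner 𝕜 b (T u) := by
    have hu : toLp 2 ((u : E), T u) ∈ T.graphL2 := mem_graphL2_iff.mpr ⟨u.2, rfl⟩
    have := Submodule.inner_left_of_mem_orthogonal hu hab
    rw [prod_inner_apply, inner_neg_left] at this
    exact eq_of_sub_eq_zero ((sub_eq_add_neg _ _).trans this)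
  exact ⟨mem_adjoint_domain_of_exists _ ⟨_, hperp⟩, adjoint_apply_eq hT _ hperp⟩

variable (T : E →ₗ.[𝕜] F) [T.graphL2.HasOrthogonalProjection]

noncomputable def graphProj : E →L[𝕜] WithLp 2 (E × F) :=
  T.graphL2.starProjection ∘L inlL 𝕜 E F

theorem norm_graphProj_le : ‖T.graphProj‖ ≤ 1 :=
  (opNorm_comp_le _ _).trans
    (mul_le_one₀ T.graphL2.starProjection_norm_le (norm_nonneg _) norm_inlL_le)

theorem graphProj_mem_graphL2 (x : E) : T.graphProj x ∈ T.graphL2 :=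
  T.graphL2.starProjection_apply_mem _

theorem isPositive_fstL_comp_graphProj [CompleteSpace E] [CompleteSpace F] :
    (fstL 2 𝕜 E F ∘L T.graphProj).IsPositive := by
  rw [← adjoint_inlL]
  exact (IsPositive.of_isStarProjection isStarProjection_starProjection).adjoint_conj _

theorem graphProj_spec [CompleteSpace E] (hT : Dense (T.domain : Set E)) (x : E) :
    ∃ (hx : (T.graphProj x).fst ∈ T.domain) (hx' : T ⟨_, hx⟩ ∈ T†.domain),
      (T.graphProj x).snd = T ⟨_, hx⟩ ∧ T† ⟨T ⟨_, hx⟩, hx'⟩ + (T.graphProj x).fst = x := by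
  have hperp : toLp 2 (x - (T.graphProj x).fst, -(T.graphProj x).snd) ∈ T.graphL2ᗮ := by
    convert T.graphL2.sub_starProjection_mem_orthogonal (inlL 𝕜 E F x) using 1
    rw [WithLp.ext_iff]
    ext <;> simp [graphProj]
  obtain ⟨hx, hAx⟩ := mem_graphL2_iff.mp (T.graphProj_mem_graphL2 x)
  obtain ⟨hx', hadj⟩ := exists_adjoint_apply_of_mem_orthogonal_graphL2 hT hperp
  refine ⟨hx, ?_⟩
  rw [hAx]
  exact ⟨hx', rfl, by rw [hadj, sub_add_cancel]⟩

end LinearPMap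

end

/-- For a closed densely defined unbounded operator `A : E → F` between
Hilbert spaces, `B = (A† ∘ A + Id)⁻¹` is an everywhere-defined bounded operator on `E` with
`‖B‖ ≤ 1`, self-adjoint and positive, and `C = A ∘ B` is an everywhere-defined bounded
operator from `E` to `F` with `‖C‖ ≤ 1`. -/
theorem stmt1 {E F : Type*} [NormedAddCommGroup E] [InnerProductSpace ℂ E] [CompleteSpace E]
    [NormedAddCommGroup F] [InnerProductSpace ℂ F] [CompleteSpace F]
    (A : E →ₗ.[ℂ] F) (hA : Dense (A.domain : Set E)) (hclosed : LinearPMap.IsClosed A) :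
    ∃ B : E →L[ℂ] E, ∃ C : E →L[ℂ] F,
      ‖B‖ ≤ 1 ∧ ‖C‖ ≤ 1 ∧ IsSelfAdjoint B ∧ (∀ x : E, 0 ≤ Complex.re (inner ℂ (B x) x : ℂ)) ∧
      ∀ x : E, ∃ (hx : B x ∈ A.domain) (hx' : A ⟨B x, hx⟩ ∈ A.adjoint.domain),
        C x = A ⟨B x, hx⟩ ∧
        A.adjoint ⟨A ⟨B x, hx⟩, hx'⟩ + B x = x := by
  have := hclosed.isClosed_graphL2.completeSpace_coe
  have hB := A.isPositive_fstL_comp_graphProj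
  refine ⟨WithLp.fstL 2 ℂ E F ∘L A.graphProj, WithLp.sndL 2 ℂ E F ∘L A.graphProj, ?_, ?_,
    hB.isSelfAdjoint, hB.re_inner_nonneg_left, A.graphProj_spec hA⟩
  · exact (ContinuousLinearMap.opNorm_comp_le _ _).trans
      (mul_le_one₀ WithLp.norm_fstL_le (norm_nonneg _) A.norm_graphProj_le)
  · exact (ContinuousLinearMap.opNorm_comp_le _ _).trans
      (mul_le_one₀ WithLp.norm_sndL_le (norm_nonneg _) A.norm_graphProj_le)
end

section
/- Let A : E → F be a closed, densely defined unbounded operator between Hilbert spaces, and let B : E → E be a bounded self-adjoint operator. Then the unbounded operator A* ∘ A + B (with domain D(A* ∘ A)) is self-adjoint. -/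
/-!
Because `A` is closed, `E × F` is the orthogonal sum of the graph of `A` and the rotated graph
`{(-A† y, y)}` of `A†`; decomposing `(w, 0)` shows that `1 + A†A` is onto. A symmetric operator
`T` that is onto is self-adjoint: for `y ∈ D(T†)` pick `x` with `T x = T† y`; then `y - x` is
orthogonal to the range of `T`, which is everything. Hence `1 + A†A`, and with it `A†A`, is
self-adjoint. Finally `(C + S)† = C† + S†` for bounded `C`, so adding `B` preserves
self-adjointness.
-/

namespace LinearPMap

variable {𝕜 E F : Type*} [RCLike 𝕜]
  [NormedAddCommGroup E] [InnerProductSpace 𝕜 E] [CompleteSpace E]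
  [NormedAddCommGroup F] [InnerProductSpace 𝕜 F]

local notation "⟪" x ", " y "⟫" => inner 𝕜 x y

section Symmetric

variable {T : E →ₗ.[𝕜] E}

theorem IsFormalAdjoint.dense_domain_of_surjective (hT : T.IsFormalAdjoint T)
    (hsurj : Function.Surjective T) : Dense (T.domain : Set E) := by
  rw [Submodule.dense_iff_topologicalClosure_eq_top, Submodule.topologicalClosure_eq_top_iff,
    Submodule.eq_bot_iff]
  intro w hw
  obtain ⟨x, rfl⟩ := hsurj w
  have hx : ∀ u : T.domain, ⟪(x : E), T u⟫ = 0 := fun u => by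
    rw [← hT x u]
    exact (Submodule.mem_orthogonal' _ _).mp hw u u.2
  obtain ⟨u, hu⟩ := hsurj x
  have : x = 0 := Subtype.ext (inner_self_eq_zero.mp (hu ▸ hx u))
  rw [this, map_zero]

theorem IsFormalAdjoint.isSelfAdjoint_of_surjective (hT : T.IsFormalAdjoint T)
    (hsurj : Function.Surjective T) : IsSelfAdjoint T := by
  have hdense := hT.dense_domain_of_surjective hsurj
  have hle : T ≤ T† := hT.le_adjoint hdense
  have hdom : T†.domain ≤ T.domain := by
    intro y hy
    obtain ⟨x, hx⟩ := hsurj (T† ⟨y, hy⟩)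
    have horth : ∀ u : T.domain, ⟪y - x, T u⟫ = 0 := fun u => by
      rw [inner_sub_left, ← hT x u, hx, adjoint_isFormalAdjoint hdense ⟨y, hy⟩ u, sub_self]
    obtain ⟨u, hu⟩ := hsurj (y - x)
    have : y = x := sub_eq_zero.mp (inner_self_eq_zero.mp (hu ▸ horth u))
    exact this ▸ x.2
  exact (eq_of_le_of_domain_eq hle (le_antisymm hle.1 hdom)).symm

end Symmetric

section Perturbation

variable [CompleteSpace F] {T : E →ₗ.[𝕜] F}

theorem IsFormalAdjoint.vadd {S : F →ₗ.[𝕜] E} (h : T.IsFormalAdjoint S) (C : E →L[𝕜] F) :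
    ((C : E →ₗ[𝕜] F) +ᵥ T).IsFormalAdjoint ((C.adjoint : F →ₗ[𝕜] E) +ᵥ S) := fun x y => by
  rw [vadd_apply, vadd_apply, inner_add_left, inner_add_right, h x y]
  simp [ContinuousLinearMap.adjoint_inner_right]

theorem adjoint_vadd (hT : Dense (T.domain : Set E)) (C : E →L[𝕜] F) :
    ((C : E →ₗ[𝕜] F) +ᵥ T)† = (C.adjoint : F →ₗ[𝕜] E) +ᵥ T† := by
  have hle := IsFormalAdjoint.le_adjoint (T := (C : E →ₗ[𝕜] F) +ᵥ T) hT
    ((adjoint_isFormalAdjoint hT).symm.vadd C)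
  refine (eq_of_le_of_domain_eq hle (le_antisymm hle.1 fun y hy => ?_)).symm
  refine mem_adjoint_domain_of_exists y ⟨((C : E →ₗ[𝕜] F) +ᵥ T)† ⟨y, hy⟩ - C.adjoint y, fun x => ?_⟩
  rw [inner_sub_left, adjoint_isFormalAdjoint (T := (C : E →ₗ[𝕜] F) +ᵥ T) hT ⟨y, hy⟩ x]
  simp [ContinuousLinearMap.adjoint_inner_left, vadd_apply, inner_add_right]

end Perturbation

theorem _root_.IsSelfAdjoint.vadd {T : E →ₗ.[𝕜] E} (hT : IsSelfAdjoint T) {C : E →L[𝕜] E}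
    (hC : IsSelfAdjoint C) : IsSelfAdjoint ((C : E →ₗ[𝕜] E) +ᵥ T) := by
  rw [isSelfAdjoint_def, adjoint_vadd hT.dense_domain, hC.adjoint_eq, isSelfAdjoint_def.mp hT]

variable {A : E →ₗ.[𝕜] F}

theorem IsClosed.exists_graph_decomposition [CompleteSpace F] (hA : Dense (A.domain : Set E))
    (hclosed : A.IsClosed) (w : E) (z : F) :
    ∃ (x : A.domain) (y : A†.domain), (x : E) - A† y = w ∧ A x + y = z := by
  let G : Submodule 𝕜 (WithLp 2 (E × F)) :=
    A.graph.comap (WithLp.linearEquiv 2 𝕜 (E × F)).toLinearMap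
  have : CompleteSpace G :=
    (hclosed.preimage (WithLp.prodContinuousLinearEquiv 2 𝕜 E F).continuous).completeSpace_coe
  obtain ⟨p, hp, r, hr, hpr⟩ := G.exists_add_mem_mem_orthogonal (WithLp.toLp 2 (w, z))
  obtain ⟨x, hx₁, hx₂⟩ := A.mem_graph_iff.mp hp
  have hr_inner : ∀ a : A.domain, ⟪-r.fst, (a : E)⟫ = ⟪r.snd, A a⟫ := fun a => by
    have h := (Submodule.mem_orthogonal G r).mp hr (WithLp.toLp 2 ((a : E), A a)) (A.mem_graph a)
    rw [WithLp.prod_inner_apply] at h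
    rw [inner_neg_left, neg_eq_iff_add_eq_zero, ← inner_conj_symm, ← inner_conj_symm r.snd]
    simpa using congrArg (starRingEnd 𝕜) h
  have hy : r.snd ∈ A†.domain := mem_adjoint_domain_of_exists _ ⟨_, hr_inner⟩
  refine ⟨x, ⟨r.snd, hy⟩, ?_, ?_⟩
  · rw [adjoint_apply_eq hA ⟨r.snd, hy⟩ hr_inner, sub_neg_eq_add]
    simpa [hx₁] using (congrArg (fun v => v.fst) hpr).symm
  · simpa [hx₂] using (congrArg (fun v => v.snd) hpr).symm

/-- `A† ∘ A` on its natural domain `{x ∈ D(A) | A x ∈ D(A†)}`. -/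
noncomputable def adjointCompSelf (A : E →ₗ.[𝕜] F) : E →ₗ.[𝕜] E :=
  A†.comp (A.domRestrict ((A†.domain.comap A.toFun).map A.domain.subtype)) fun x => by
    obtain ⟨y, hy, hyx⟩ := Submodule.mem_map.mp x.2.1
    rw [domRestrict_apply hyx.symm]
    exact hy

theorem mem_adjointCompSelf_domain {x : E} :
    x ∈ A.adjointCompSelf.domain ↔ ∃ hx : x ∈ A.domain, A ⟨x, hx⟩ ∈ A†.domain := by
  constructor
  · rintro ⟨⟨y, hy, rfl⟩, -⟩
    exact ⟨y.2, hy⟩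
  · rintro ⟨hx, hAx⟩
    exact ⟨⟨⟨x, hx⟩, hAx, rfl⟩, hx⟩

theorem adjointCompSelf_apply {x : E} (hx : x ∈ A.domain) (hAx : A ⟨x, hx⟩ ∈ A†.domain) :
    A.adjointCompSelf ⟨x, mem_adjointCompSelf_domain.mpr ⟨hx, hAx⟩⟩ = A† ⟨A ⟨x, hx⟩, hAx⟩ :=
  rfl

theorem isFormalAdjoint_adjointCompSelf (hA : Dense (A.domain : Set E)) :
    A.adjointCompSelf.IsFormalAdjoint A.adjointCompSelf := by
  rintro ⟨x, hx'⟩ ⟨y, hy'⟩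
  obtain ⟨hx, hAx⟩ := mem_adjointCompSelf_domain.mp hx'
  obtain ⟨hy, hAy⟩ := mem_adjointCompSelf_domain.mp hy'
  calc ⟪A.adjointCompSelf ⟨x, hx'⟩, y⟫ = ⟪A† ⟨A ⟨x, hx⟩, hAx⟩, y⟫ := rfl
    _ = ⟪A ⟨x, hx⟩, A ⟨y, hy⟩⟫ := adjoint_isFormalAdjoint hA _ ⟨y, hy⟩
    _ = ⟪x, A† ⟨A ⟨y, hy⟩, hAy⟩⟫ := (adjoint_isFormalAdjoint hA).symm ⟨x, hx⟩ ⟨_, hAy⟩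

theorem IsClosed.surjective_one_vadd_adjointCompSelf [CompleteSpace F]
    (hA : Dense (A.domain : Set E)) (hclosed : A.IsClosed) :
    Function.Surjective (((1 : E →L[𝕜] E) : E →ₗ[𝕜] E) +ᵥ A.adjointCompSelf) := by
  intro w
  obtain ⟨x, y, hw, hz⟩ := hclosed.exists_graph_decomposition hA w 0
  have hAx : A x = -y := eq_neg_of_add_eq_zero_left hz
  have hAx_mem : A x ∈ A†.domain := by
    rw [hAx]
    exact neg_mem y.2
  have hx : (x : E) ∈ A.adjointCompSelf.domain :=
    mem_adjointCompSelf_domain.mpr ⟨x.2, hAx_mem⟩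
  refine ⟨⟨x, by rwa [vadd_domain]⟩, ?_⟩
  have hAAx : A† ⟨A x, hAx_mem⟩ = -A† y := by
    rw [← LinearPMap.map_neg]
    exact congrArg A† (Subtype.ext hAx)
  rw [vadd_apply, adjointCompSelf_apply x.2 hAx_mem, hAAx, ← sub_eq_add_neg]
  exact hw

theorem IsClosed.isSelfAdjoint_adjointCompSelf [CompleteSpace F]
    (hA : Dense (A.domain : Set E)) (hclosed : A.IsClosed) :
    IsSelfAdjoint A.adjointCompSelf := by
  have hsymm : (((1 : E →L[𝕜] E) : E →ₗ[𝕜] E) +ᵥ A.adjointCompSelf).IsFormalAdjoint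
      (((1 : E →L[𝕜] E) : E →ₗ[𝕜] E) +ᵥ A.adjointCompSelf) := by
    have h := (isFormalAdjoint_adjointCompSelf hA).vadd 1
    rwa [(IsSelfAdjoint.one (E →L[𝕜] E)).adjoint_eq] at h
  have h := (hsymm.isSelfAdjoint_of_surjective
    (hclosed.surjective_one_vadd_adjointCompSelf hA)).vadd (IsSelfAdjoint.one _).neg
  rwa [ContinuousLinearMap.toLinearMap_neg, neg_vadd_vadd] at h

end LinearPMap

open LinearPMap

/-- If `A : E → F` is a closed densely defined unbounded operator between
Hilbert spaces and `B : E → E` is a bounded self-adjoint operator, then the unbounded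
operator `A† ∘ A + B`, with domain `{x ∈ D(A) | A x ∈ D(A†)}` and acting by
`x ↦ A† (A x) + B x`, is self-adjoint (equal to its own adjoint). -/
theorem stmt2 {E F : Type*} [NormedAddCommGroup E] [InnerProductSpace ℂ E] [CompleteSpace E]
    [NormedAddCommGroup F] [InnerProductSpace ℂ F] [CompleteSpace F]
    (A : E →ₗ.[ℂ] F) (hA : Dense (A.domain : Set E)) (hclosed : LinearPMap.IsClosed A)
    (B : E →L[ℂ] E) (hB : IsSelfAdjoint B)
    (T : E →ₗ.[ℂ] E)
    (hdom : ∀ x : E, x ∈ T.domain ↔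
      ∃ hx : x ∈ A.domain, A ⟨x, hx⟩ ∈ A.adjoint.domain)
    (happ : ∀ (x : E) (hx : x ∈ A.domain) (hx' : A ⟨x, hx⟩ ∈ A.adjoint.domain),
      T ⟨x, (hdom x).mpr ⟨hx, hx'⟩⟩ = A.adjoint ⟨A ⟨x, hx⟩, hx'⟩ + B x) :
    T.adjoint = T := by
  have hT : T = (B : E →ₗ[ℂ] E) +ᵥ A.adjointCompSelf := by
    ext x hxT _
    · exact (hdom x).trans mem_adjointCompSelf_domain.symm
    · obtain ⟨hx, hAx⟩ := (hdom x).mp hxT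
      rw [vadd_apply, happ x hx hAx, adjointCompSelf_apply hx hAx]
      exact add_comm _ _
  rw [hT]
  exact (hclosed.isSelfAdjoint_adjointCompSelf hA).vadd hB
end

section
/- Let f : (0, a] → ℝ be nonnegative and integrable on (0, a]. Then there exists a sequence tₙ → 0⁺ with tₙ ∈ (0, a] such that f(tₙ) · tₙ · |ln tₙ| → 0. -/
/-!
The weight `(t |log t|)⁻¹` is the derivative of `-log (-log t)`, which blows up as `t → 0⁺`, so
it is not integrable on any `(0, δ)`. An integrable `f` therefore cannot dominate
`ε (t |log t|)⁻¹` throughout `(0, δ)`; taking `δ = ε = 1/(n+1)` produces the sequence.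
-/

open MeasureTheory Filter Topology Set Asymptotics

theorem not_integrableOn_Ioo_inv_mul_abs_log {δ : ℝ} (hδ : 0 < δ) :
    ¬ IntegrableOn (fun t => (t * |Real.log t|)⁻¹) (Ioo 0 δ) := by
  have hderiv : ∀ᶠ t in 𝓝[>] (0 : ℝ),
      HasDerivAt (fun t => Real.log (Real.log t)) (-(t * |Real.log t|)⁻¹) t := by
    filter_upwards [Ioo_mem_nhdsGT (zero_lt_one' ℝ)] with t ht
    have hlog : Real.log t < 0 := Real.log_neg ht.1 ht.2
    convert ((Real.hasDerivAt_log ht.1.ne').log hlog.ne) using 1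
    rw [abs_of_neg hlog]
    field_simp
  have hlim : Tendsto (fun t => ‖Real.log (Real.log t)‖) (𝓝[>] 0) atTop := by
    refine tendsto_norm_atTop_atTop.comp ?_
    simpa only [Function.comp_def, Real.log_abs] using
      Real.tendsto_log_atTop.comp (tendsto_abs_atBot_atTop.comp Real.tendsto_log_nhdsGT_zero)
  exact not_integrableOn_of_tendsto_norm_atTop_of_deriv_isBigO_filter (𝓝[>] 0)
    (Ioo_mem_nhdsGT hδ) (hderiv.mono fun t ht => ht.differentiableAt) hlim
    (EventuallyEq.trans_isBigO (hderiv.mono fun t ht => ht.deriv) (isBigO_refl _ _).neg_left)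

theorem exists_norm_lt_mul_of_integrableOn_of_not_integrableOn {α E F : Type*}
    [MeasurableSpace α] {μ : Measure α} [NormedAddCommGroup E] [NormedAddCommGroup F]
    {f : α → E} {g : α → F} {s : Set α} (hs : MeasurableSet s) (hf : IntegrableOn f s μ)
    (hg : AEStronglyMeasurable g (μ.restrict s)) (hgi : ¬ IntegrableOn g s μ) {ε : ℝ}
    (hε : 0 < ε) : ∃ t ∈ s, ‖f t‖ < ε * ‖g t‖ := by
  by_contra! hle
  refine hgi (hf.norm.const_mul ε⁻¹ |>.mono' hg ?_)
  filter_upwards [ae_restrict_mem hs] with t ht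
  rw [le_inv_mul_iff₀ hε]
  exact hle t ht

theorem exists_mem_Ioo_norm_mul_mul_abs_log_lt {E : Type*} [NormedAddCommGroup E] {f : ℝ → E}
    {δ ε : ℝ} (hδ : 0 < δ) (hf : IntegrableOn f (Ioo 0 δ)) (hε : 0 < ε) :
    ∃ t ∈ Ioo 0 δ, ‖f t‖ * t * |Real.log t| < ε := by
  obtain ⟨t, ht, hlt⟩ := exists_norm_lt_mul_of_integrableOn_of_not_integrableOn measurableSet_Ioo
    hf (by fun_prop) (not_integrableOn_Ioo_inv_mul_abs_log hδ) hε
  have hw : 0 ≤ t * |Real.log t| := mul_nonneg ht.1.le (abs_nonneg _)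
  rw [norm_inv, Real.norm_of_nonneg hw] at hlt
  have hw' : 0 < t * |Real.log t| := hw.lt_of_ne fun h => by
    rw [← h, inv_zero, mul_zero] at hlt
    exact (norm_nonneg _).not_gt hlt
  refine ⟨t, ht, ?_⟩
  rwa [mul_assoc, ← lt_div_iff₀ hw', div_eq_mul_inv]

/-- If `f : (0, a] → ℝ` is nonnegative and integrable on `(0, a]`, then
there is a sequence `tₙ → 0⁺` in `(0, a]` along which `f(tₙ) · tₙ · |log tₙ| → 0`. -/
theorem stmt10 (a : ℝ) (ha : 0 < a) (f : ℝ → ℝ)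
    (hf0 : ∀ t ∈ Set.Ioc 0 a, 0 ≤ f t)
    (hf : IntegrableOn f (Set.Ioc 0 a) volume) :
    ∃ t : ℕ → ℝ, (∀ n, t n ∈ Set.Ioc 0 a) ∧ Tendsto t atTop (𝓝 0) ∧
      Tendsto (fun n => f (t n) * t n * |Real.log (t n)|) atTop (𝓝 0) := by
  have hδ (n : ℕ) : 0 < min a (1 / (n + 1)) := lt_min ha Nat.one_div_pos_of_nat
  choose t ht hlt using fun n : ℕ => exists_mem_Ioo_norm_mul_mul_abs_log_lt (hδ n)
    (hf.mono_set (Ioo_subset_Ioc_self.trans (Ioc_subset_Ioc_right (min_le_left _ _))))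
    (Nat.one_div_pos_of_nat (n := n))
  have hmem (n : ℕ) : t n ∈ Ioc 0 a := ⟨(ht n).1, (ht n).2.le.trans (min_le_left _ _)⟩
  refine ⟨t, hmem, ?_, ?_⟩
  · exact squeeze_zero (fun n => (ht n).1.le) (fun n => (ht n).2.le.trans (min_le_right _ _))
      tendsto_one_div_add_atTop_nhds_zero_nat
  · refine squeeze_zero (fun n => ?_) (fun n => ?_) tendsto_one_div_add_atTop_nhds_zero_nat
    · exact mul_nonneg (mul_nonneg (hf0 _ (hmem n)) (hmem n).1.le) (abs_nonneg _)
    · simpa only [Real.norm_of_nonneg (hf0 _ (hmem n))] using (hlt n).le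
end

section
/- Consider the 3×3 linear system over ℂ in unknowns (f₀, g₀, h₀) with parameter κ ∈ ℂ, p ∈ ℤ, γ > 0: (−κ² + 2 + p²γ²)f₀ − 2g₀ + 2ipγ h₀ = 0, −2f₀ + (−κ² + 2 + p²γ²)g₀ − 2ipγ h₀ = 0, −4ipγ f₀ + 4ipγ g₀ + (−κ² + 4 + p²γ²)h₀ = 0. The system has nontrivial solutions exactly when κ ∈ {±pγ, ±(pγ+2), ±(pγ−2)}; for κ = ±(pγ+2) the kernel contains (−1, 1, 2i), for κ = ±(pγ−2) it contains (1, −1, 2i), and for κ = ±pγ it contains (1, 1, 0). -/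
open Complex Matrix

/-- The indicial system for the linearized Einstein operator
`P = ∇*∇ − 2R̊` on the `(eʳ·eʳ, eᶿ·eᶿ, eʳ·eᶿ)` components: the 3×3 complex system in
`(f₀, g₀, h₀)` with parameters `κ ∈ ℂ`, `p ∈ ℤ`, `γ > 0` has a nontrivial solution
exactly when `κ ∈ {±pγ, ±(pγ+2), ±(pγ−2)}`; for `κ = ±(pγ+2)` the kernel contains
`(−1, 1, 2i)`, for `κ = ±(pγ−2)` it contains `(1, −1, 2i)`, and for `κ = ±pγ` it
contains `(1, 1, 0)`. -/
theorem stmt19 (κ : ℂ) (p : ℤ) (γ : ℝ) (hγ : 0 < γ) :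
    ∀ M : Matrix (Fin 3) (Fin 3) ℂ,
    M = !![-κ^2 + 2 + ((p:ℂ)*(γ:ℂ))^2, -2, 2*I*((p:ℂ)*(γ:ℂ));
           -2, -κ^2 + 2 + ((p:ℂ)*(γ:ℂ))^2, -2*I*((p:ℂ)*(γ:ℂ));
           -4*I*((p:ℂ)*(γ:ℂ)), 4*I*((p:ℂ)*(γ:ℂ)), -κ^2 + 4 + ((p:ℂ)*(γ:ℂ))^2] →
    (((∃ v : Fin 3 → ℂ, v ≠ 0 ∧ M.mulVec v = 0) ↔
      (κ = (p:ℂ)*(γ:ℂ) ∨ κ = -((p:ℂ)*(γ:ℂ)) ∨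
       κ = (p:ℂ)*(γ:ℂ) + 2 ∨ κ = -((p:ℂ)*(γ:ℂ) + 2) ∨
       κ = (p:ℂ)*(γ:ℂ) - 2 ∨ κ = -((p:ℂ)*(γ:ℂ) - 2))) ∧
    ((κ = (p:ℂ)*(γ:ℂ) + 2 ∨ κ = -((p:ℂ)*(γ:ℂ) + 2)) → M.mulVec ![-1, 1, 2*I] = 0) ∧
    ((κ = (p:ℂ)*(γ:ℂ) - 2 ∨ κ = -((p:ℂ)*(γ:ℂ) - 2)) → M.mulVec ![1, -1, 2*I] = 0) ∧
    ((κ = (p:ℂ)*(γ:ℂ) ∨ κ = -((p:ℂ)*(γ:ℂ))) → M.mulVec ![1, 1, 0] = 0)) := by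
  intro M hM
  set a : ℂ := (p:ℂ)*(γ:ℂ) with ha
  have hI : (I:ℂ)^2 = -1 := Complex.I_sq
  refine ⟨?_, ?_, ?_, ?_⟩
  · rw [Matrix.exists_mulVec_eq_zero_iff]
    have hdet : M.det = -((κ - a) * (κ + a) * (κ - (a + 2)) * (κ + (a + 2)) *
        (κ - (a - 2)) * (κ + (a - 2))) := by
      simp [hM, Matrix.det_fin_three]
      linear_combination (16*a^4 - 16*a^2*κ^2) * hI
    rw [hdet, neg_eq_zero]
    constructor
    · intro h'
      rcases mul_eq_zero.mp h' with h' | h6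
      · rcases mul_eq_zero.mp h' with h' | h5
        · rcases mul_eq_zero.mp h' with h' | h4
          · rcases mul_eq_zero.mp h' with h' | h3
            · rcases mul_eq_zero.mp h' with h1 | h2
              · exact Or.inl (by linear_combination h1)
              · exact Or.inr (Or.inl (by linear_combination h2))
            · exact Or.inr (Or.inr (Or.inl (by linear_combination h3)))
          · exact Or.inr (Or.inr (Or.inr (Or.inl (by linear_combination h4))))
        · exact Or.inr (Or.inr (Or.inr (Or.inr (Or.inl (by linear_combination h5)))))
      · exact Or.inr (Or.inr (Or.inr (Or.inr (Or.inr (by linear_combination h6)))))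
    · intro h
      rcases h with h | h | h | h | h | h <;> rw [h] <;> ring
  · intro h
    have h2 : κ^2 = (a + 2)^2 := by rcases h with h | h <;> rw [h] <;> ring
    rw [hM]
    funext i
    fin_cases i <;>
      simp [Matrix.mulVec, dotProduct, Fin.sum_univ_three] <;>
      first
        | linear_combination h2 + 4*a*hI
        | linear_combination -h2 - 4*a*hI
        | linear_combination 2*I*h2
        | linear_combination -2*I*h2
        | linear_combination h2
        | linear_combination -h2
        | ring
  · intro h
    have h2 : κ^2 = (a - 2)^2 := by rcases h with h | h <;> rw [h] <;> ring
    rw [hM]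
    funext i
    fin_cases i <;>
      simp [Matrix.mulVec, dotProduct, Fin.sum_univ_three] <;>
      first
        | linear_combination h2 + 4*a*hI
        | linear_combination -h2 - 4*a*hI
        | linear_combination h2 - 4*a*hI
        | linear_combination -h2 + 4*a*hI
        | linear_combination 2*I*h2
        | linear_combination -2*I*h2
        | linear_combination h2
        | linear_combination -h2
        | ring
  · intro h
    have h2 : κ^2 = a^2 := by rcases h with h | h <;> rw [h] <;> ring
    rw [hM]
    funext i
    fin_cases i <;>
      simp [Matrix.mulVec, dotProduct, Fin.sum_univ_three] <;>
      first
        | linear_combination h2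
        | linear_combination -h2
        | ring
end
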